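/- Let A ∈ M_n(ℂ) and let z ∈ F(A) be such that for every δ > 0 the set z + δ(F(A) − z) contains a relative neighborhood of z in F(A) (in particular this holds if z is an interior point of F(A)). Then for every unit vector x with x*Ax = z and every relatively open neighborhood U of x in the unit sphere, f_A(U) contains a relative neighborhood of z in F(A). -/

import Mathlib

open Matrix

/-- The field of values generating function `f_A(x) = x* A x`. -/
noncomputable def fA {m : Type*} [Fintype m] (A : Matrix m m ℂ) (x : m → ℂ) : ℂ :=
  star x ⬝ᵥ A.mulVec x

/-- The numerical range (field of values) of `A`. -/
def NR {m : Type*} [Fintype m] (A : Matrix m m ℂ) : Set ℂ :=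
  {z | ∃ x, star x ⬝ᵥ x = 1 ∧ fA A x = z}

/-- Euclidean norm on `m → ℂ`. -/
noncomputable def enorm {m : Type*} [Fintype m] (x : m → ℂ) : ℝ :=
  Real.sqrt (∑ i, ‖x i‖ ^ 2)

/-- Projective distance: infimum of `‖x - ω • y‖` over unimodular `ω`. -/
noncomputable def projDist {m : Type*} [Fintype m] (x y : m → ℂ) : ℝ :=
  sInf {d | ∃ ω : ℂ, ‖ω‖ = 1 ∧ d = _root_.enorm (x - ω • y)}

/-!
Put `B(v) = ⟪v, (T - z) v⟫` with `T` the operator of `A` and `z = f_A(x)`, so that `B(x) = 0`, and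
let `y` be a unit vector with `f_A(y) = u`. After multiplying `y` by a suitable phase, the cross
term of `B` on the segment `w_t = (1 - t) x + t y` is a nonnegative multiple `β (u - z)` of
`B(y) = u - z`, so `B(w_t) = (t² + t (1 - t) β) (u - z)`. Comparing with `δ ‖w_t‖²`, the
intermediate value theorem gives `t ≤ √δ` with `B(w_t) = δ ‖w_t‖² (u - z)`; normalizing `w_t`
produces a unit vector within `4 √δ` of `x` on which `f_A` takes the value `z + δ (u - z)`.
For `δ` small the relative neighbourhood `z + δ (F(A) - z)` of the hypothesis therefore lies in
`f_A(U)`.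
-/

open Complex ComplexConjugate
open scoped InnerProductSpace

theorem Complex.exists_norm_eq_one_mul_add_conj_mul_eq_ofReal_nonneg (a b : ℂ) :
    ∃ ω : ℂ, ‖ω‖ = 1 ∧ ∃ β : ℝ, 0 ≤ β ∧ ω * a + conj ω * b = β := by
  set ω₀ : ℂ := exp (↑(-arg (a - conj b)) * I)
  have hω₀ : ‖ω₀‖ = 1 := norm_exp_ofReal_mul_I _
  have him : (ω₀ * a + conj ω₀ * b).im = (ω₀ * (a - conj b)).im := by
    simp only [add_im, mul_im, sub_re, sub_im, conj_re, conj_im]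
    ring
  have hrot : ω₀ * (a - conj b) = ‖a - conj b‖ := by
    conv_lhs => rw [← norm_mul_exp_arg_mul_I (a - conj b)]
    rw [mul_left_comm, ← exp_add]
    push_cast
    simp
  set r := (ω₀ * a + conj ω₀ * b).re
  have hr : ω₀ * a + conj ω₀ * b = r := ext rfl (by rw [him, hrot, ofReal_im, ofReal_im])
  rcases le_total 0 r with h | h
  · exact ⟨ω₀, hω₀, r, h, hr⟩
  · refine ⟨-ω₀, by rw [norm_neg, hω₀], -r, neg_nonneg.2 h, ?_⟩
    rw [map_neg, ofReal_neg, ← hr]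
    ring

variable {𝕜 E : Type*} [RCLike 𝕜] [NormedAddCommGroup E] [NormedSpace 𝕜 E] in
theorem norm_inv_norm_smul_sub_le {x : E} (hx : ‖x‖ = 1) (w : E) :
    ‖(‖w‖⁻¹ : 𝕜) • w - x‖ ≤ 2 * ‖w - x‖ := by
  have hnormalize : ‖(‖w‖⁻¹ : 𝕜) • w - w‖ ≤ ‖w - x‖ := by
    rcases eq_or_ne w 0 with rfl | hw
    · simp
    have hw' : ‖w‖ ≠ 0 := norm_ne_zero_iff.2 hw
    calc ‖(‖w‖⁻¹ : 𝕜) • w - w‖ = |(‖w‖⁻¹ - 1) * ‖w‖| := by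
          rw [abs_mul, abs_norm, ← RCLike.norm_ofReal (K := 𝕜), ← norm_smul,
            RCLike.ofReal_sub, RCLike.ofReal_inv, RCLike.ofReal_one, sub_smul, one_smul]
      _ = |‖x‖ - ‖w‖| := by rw [sub_mul, inv_mul_cancel₀ hw', one_mul, hx]
      _ ≤ ‖w - x‖ := (abs_norm_sub_norm_le x w).trans_eq (norm_sub_rev x w)
  calc ‖(‖w‖⁻¹ : 𝕜) • w - x‖ ≤ ‖(‖w‖⁻¹ : 𝕜) • w - w‖ + ‖w - x‖ :=
        norm_sub_le_norm_sub_add_norm_sub _ _ _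
    _ ≤ 2 * ‖w - x‖ := by linarith

section

variable {E : Type*} [NormedAddCommGroup E] [InnerProductSpace ℂ E]

theorem inner_map_smul_add_smul (S : E →ₗ[ℂ] E) (a b : ℂ) (x y : E) :
    ⟪a • x + b • y, S (a • x + b • y)⟫_ℂ =
      conj a * a * ⟪x, S x⟫_ℂ + conj a * b * ⟪x, S y⟫_ℂ
        + conj b * a * ⟪y, S x⟫_ℂ + conj b * b * ⟪y, S y⟫_ℂ := by
  simp only [map_add, map_smul, inner_add_left, inner_add_right, inner_smul_left,
    inner_smul_right]
  ring

theorem norm_one_sub_smul_add_smul_le {x y : E} (hx : ‖x‖ = 1) (hy : ‖y‖ = 1) {t : ℝ}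
    (ht : t ∈ Set.Icc (0 : ℝ) 1) : ‖(1 - t : ℂ) • x + (t : ℂ) • y‖ ≤ 1 := by
  have h1t : (1 - t : ℂ) = ((1 - t : ℝ) : ℂ) := by push_cast; rfl
  calc ‖(1 - t : ℂ) • x + (t : ℂ) • y‖ ≤ ‖(1 - t : ℂ) • x‖ + ‖(t : ℂ) • y‖ := norm_add_le _ _
    _ = 1 := by
      rw [norm_smul, norm_smul, hx, hy, h1t, Complex.norm_of_nonneg (by linarith [ht.2]),
        Complex.norm_of_nonneg ht.1]
      ring

theorem exists_mem_Icc_sq_add_mul_eq_mul_norm_sq {x y : E} (hx : ‖x‖ = 1) (hy : ‖y‖ = 1)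
    {β δ : ℝ} (hβ : 0 ≤ β) (hδ0 : 0 < δ) (hδ1 : δ ≤ 1) :
    ∃ t ∈ Set.Icc 0 √δ,
      t ^ 2 + t * (1 - t) * β = δ * ‖(1 - t : ℂ) • x + (t : ℂ) • y‖ ^ 2 := by
  set φ : ℝ → ℝ := fun t ↦ t ^ 2 + t * (1 - t) * β - δ * ‖(1 - t : ℂ) • x + (t : ℂ) • y‖ ^ 2
  have hφ : Continuous φ := by fun_prop
  have hsqrt : √δ ≤ 1 := Real.sqrt_le_one.2 hδ1
  have hφ0 : φ 0 ≤ 0 := by simp [φ, hx, hδ0.le]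
  have hφδ : 0 ≤ φ √δ := by
    have hnorm := norm_one_sub_smul_add_smul_le hx hy ⟨Real.sqrt_nonneg δ, hsqrt⟩
    have hcross : 0 ≤ √δ * (1 - √δ) * β :=
      mul_nonneg (mul_nonneg (Real.sqrt_nonneg δ) (by linarith)) hβ
    simp only [φ, Real.sq_sqrt hδ0.le]
    nlinarith [pow_le_one₀ (norm_nonneg ((1 - (√δ : ℂ)) • x + (√δ : ℂ) • y)) hnorm (n := 2)]
  obtain ⟨t, ht, hφt⟩ := intermediate_value_Icc (Real.sqrt_nonneg δ) hφ.continuousOn ⟨hφ0, hφδ⟩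
  exact ⟨t, ht, sub_eq_zero.1 hφt⟩

theorem exists_norm_eq_one_inner_map_self_eq_mul_of_cross {S : E →ₗ[ℂ] E} {x y : E}
    (hx : ‖x‖ = 1) (hy : ‖y‖ = 1) (hSx : ⟪x, S x⟫_ℂ = 0) {β : ℝ} (hβ : 0 ≤ β)
    (hcross : ⟪x, S y⟫_ℂ + ⟪y, S x⟫_ℂ = β * ⟪y, S y⟫_ℂ) {δ : ℝ} (hδ0 : 0 < δ) (hδ1 : δ ≤ 1) :
    ∃ v, ‖v‖ = 1 ∧ ⟪v, S v⟫_ℂ = δ * ⟪y, S y⟫_ℂ ∧ ‖v - x‖ ≤ 4 * √δ := by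
  obtain ⟨t, ⟨ht0, htδ⟩, ht⟩ := exists_mem_Icc_sq_add_mul_eq_mul_norm_sq hx hy hβ hδ0 hδ1
  have ht1 : t ≤ 1 := htδ.trans (Real.sqrt_le_one.2 hδ1)
  set w := (1 - t : ℂ) • x + (t : ℂ) • y
  have hSw : ⟪w, S w⟫_ℂ = (δ * ‖w‖ ^ 2 : ℝ) * ⟪y, S y⟫_ℂ := by
    rw [inner_map_smul_add_smul, hSx, ← ht]
    simp only [map_sub, map_one, conj_ofReal]
    push_cast
    linear_combination ((1 - t : ℂ) * t) * hcross
  have hw : w ≠ 0 := by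
    rintro hw
    rw [hw, norm_zero] at ht
    rcases ht0.eq_or_lt with rfl | ht0
    · simp only [w, sub_zero, ofReal_zero, one_smul, zero_smul, add_zero] at hw
      simp [hw] at hx
    · nlinarith [mul_nonneg (mul_nonneg ht0.le (sub_nonneg.2 ht1)) hβ]
  have hwx : ‖w - x‖ ≤ 2 * t := by
    have : w - x = (t : ℂ) • (y - x) := by simp only [w]; module
    rw [this, norm_smul, Complex.norm_of_nonneg ht0, mul_comm]
    gcongr
    linarith [norm_sub_le y x]
  refine ⟨(‖w‖⁻¹ : ℂ) • w, norm_smul_inv_norm hw, ?_, ?_⟩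
  · rw [map_smul, inner_smul_left, inner_smul_right, hSw, map_inv₀, conj_ofReal]
    have : (‖w‖ : ℂ) ≠ 0 := ofReal_ne_zero.2 (norm_ne_zero_iff.2 hw)
    push_cast
    field_simp
  · calc ‖(‖w‖⁻¹ : ℂ) • w - x‖ ≤ 2 * ‖w - x‖ := norm_inv_norm_smul_sub_le hx w
      _ ≤ 4 * √δ := by linarith

theorem exists_norm_eq_one_inner_map_self_eq_mul {S : E →ₗ[ℂ] E} {x y : E}
    (hx : ‖x‖ = 1) (hy : ‖y‖ = 1) (hSx : ⟪x, S x⟫_ℂ = 0) {δ : ℝ} (hδ0 : 0 < δ) (hδ1 : δ ≤ 1) :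
    ∃ v, ‖v‖ = 1 ∧ ⟪v, S v⟫_ℂ = δ * ⟪y, S y⟫_ℂ ∧ ‖v - x‖ ≤ 4 * √δ := by
  set c := ⟪y, S y⟫_ℂ
  rcases eq_or_ne c 0 with hc | hc
  · exact ⟨x, hx, by rw [hSx, hc, mul_zero], by simp [Real.sqrt_nonneg]⟩
  obtain ⟨ω, hω, β, hβ, hωβ⟩ :=
    exists_norm_eq_one_mul_add_conj_mul_eq_ofReal_nonneg (⟪x, S y⟫_ℂ / c) (⟪y, S x⟫_ℂ / c)
  have hSωy : ⟪ω • y, S (ω • y)⟫_ℂ = c := by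
    rw [map_smul, inner_smul_left, inner_smul_right, ← mul_assoc, conj_mul', hω, ofReal_one,
      one_pow, one_mul]
  have hcross : ⟪x, S (ω • y)⟫_ℂ + ⟪ω • y, S x⟫_ℂ = β * ⟪ω • y, S (ω • y)⟫_ℂ := by
    rw [hSωy, map_smul, inner_smul_right, inner_smul_left, ← hωβ]
    field_simp
  simpa only [hSωy] using exists_norm_eq_one_inner_map_self_eq_mul_of_cross hx
    (by rw [norm_smul, hω, hy, one_mul]) hSx hβ hcross hδ0 hδ1

theorem exists_norm_eq_one_inner_map_self_eq_add_mul_sub (T : E →ₗ[ℂ] E) {x y : E}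
    (hx : ‖x‖ = 1) (hy : ‖y‖ = 1) {δ : ℝ} (hδ0 : 0 < δ) (hδ1 : δ ≤ 1) :
    ∃ v, ‖v‖ = 1 ∧ ⟪v, T v⟫_ℂ = ⟪x, T x⟫_ℂ + δ * (⟪y, T y⟫_ℂ - ⟪x, T x⟫_ℂ) ∧
      ‖v - x‖ ≤ 4 * √δ := by
  set z := ⟪x, T x⟫_ℂ
  have hshift : ∀ v : E, ‖v‖ = 1 →
      ⟪v, (T - z • LinearMap.id : E →ₗ[ℂ] E) v⟫_ℂ = ⟪v, T v⟫_ℂ - z := by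
    intro v hv
    rw [LinearMap.sub_apply, inner_sub_right, LinearMap.smul_apply, LinearMap.id_apply,
      inner_smul_right, inner_self_eq_norm_sq_to_K, hv]
    simp
  obtain ⟨v, hv, hSv, hvx⟩ := exists_norm_eq_one_inner_map_self_eq_mul hx hy
    (by rw [hshift x hx, sub_self]) hδ0 hδ1 (S := T - z • LinearMap.id)
  rw [hshift v hv, hshift y hy] at hSv
  exact ⟨v, hv, by linear_combination hSv, hvx⟩

end

theorem fA_eq_inner_toEuclideanLin {m : Type*} [Fintype m] [DecidableEq m] (A : Matrix m m ℂ)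
    (x : m → ℂ) :
    fA A x = ⟪WithLp.toLp 2 x, Matrix.toEuclideanLin A (WithLp.toLp 2 x)⟫_ℂ := by
  rw [fA, Matrix.toLpLin_toLp, EuclideanSpace.inner_toLp_toLp, dotProduct_comm,
    Matrix.toLin'_apply]

theorem star_dotProduct_self_eq_one_iff {m : Type*} [Fintype m] (x : m → ℂ) :
    star x ⬝ᵥ x = 1 ↔ ‖WithLp.toLp 2 x‖ = 1 := by
  rw [dotProduct_comm, ← EuclideanSpace.inner_toLp_toLp, inner_self_eq_norm_sq_to_K,
    ← RCLike.ofReal_pow, ← RCLike.ofReal_one, RCLike.ofReal_inj]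
  exact pow_eq_one_iff_of_nonneg (norm_nonneg (WithLp.toLp 2 x)) two_ne_zero

theorem openness_of_fA_at_scaling_points_general
    {n : ℕ} (A : Matrix (Fin n) (Fin n) ℂ) (z : ℂ)
    (hscale : ∀ δ : ℝ, 0 < δ → ∃ V : Set ℂ, IsOpen V ∧ z ∈ V ∧
      V ∩ NR A ⊆ {w | ∃ u ∈ NR A, w = z + (δ : ℂ) * (u - z)}) :
    ∀ x : Fin n → ℂ, star x ⬝ᵥ x = 1 → fA A x = z →
    ∀ U : Set (Fin n → ℂ), x ∈ U →
      (∃ V : Set (Fin n → ℂ), IsOpen V ∧ U = V ∩ {y | star y ⬝ᵥ y = 1}) →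
      ∃ W : Set ℂ, IsOpen W ∧ z ∈ W ∧ W ∩ NR A ⊆ fA A '' U := by
  rintro x hx rfl U hxU ⟨V, hV, rfl⟩
  obtain ⟨ε, hε, hball⟩ := Metric.isOpen_iff.1 (hV.preimage (PiLp.continuous_ofLp 2 _))
    (WithLp.toLp 2 x) hxU.1
  obtain ⟨δ, hδ0, hδ1, hδε⟩ : ∃ δ : ℝ, 0 < δ ∧ δ ≤ 1 ∧ 4 * √δ < ε := by
    refine ⟨min 1 ((ε / 5) ^ 2), by positivity, min_le_left _ _, ?_⟩
    have : √(min 1 ((ε / 5) ^ 2)) ≤ ε / 5 :=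
      (Real.sqrt_le_sqrt (min_le_right _ _)).trans_eq (Real.sqrt_sq (by positivity))
    linarith
  obtain ⟨W, hW, hzW, hWsub⟩ := hscale δ hδ0
  refine ⟨W, hW, hzW, fun w hw ↦ ?_⟩
  obtain ⟨_, ⟨y, hy, rfl⟩, rfl⟩ := hWsub hw
  obtain ⟨v, hv, hfv, hvx⟩ := exists_norm_eq_one_inner_map_self_eq_add_mul_sub
    (Matrix.toEuclideanLin A) ((star_dotProduct_self_eq_one_iff x).1 hx)
    ((star_dotProduct_self_eq_one_iff y).1 hy) hδ0 hδ1
  refine ⟨WithLp.ofLp v, ⟨hball ?_, (star_dotProduct_self_eq_one_iff _).2 hv⟩, ?_⟩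
  · rw [Metric.mem_ball, dist_eq_norm]
    exact hvx.trans_lt hδε
  · simpa only [fA_eq_inner_toEuclideanLin, WithLp.toLp_ofLp] using hfv

theorem openness_of_fA_at_scaling_points
    {n : ℕ} (A : Matrix (Fin n) (Fin n) ℂ) (z : ℂ) (hz : z ∈ NR A)
    (hscale : ∀ δ : ℝ, 0 < δ → ∃ V : Set ℂ, IsOpen V ∧ z ∈ V ∧
      V ∩ NR A ⊆ {w | ∃ u ∈ NR A, w = z + (δ : ℂ) * (u - z)}) :
    ∀ x : Fin n → ℂ, star x ⬝ᵥ x = 1 → fA A x = z →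
    ∀ U : Set (Fin n → ℂ), x ∈ U →
      (∃ V : Set (Fin n → ℂ), IsOpen V ∧ U = V ∩ {y | star y ⬝ᵥ y = 1}) →
      ∃ W : Set ℂ, IsOpen W ∧ z ∈ W ∧ W ∩ NR A ⊆ fA A '' U :=
  openness_of_fA_at_scaling_points_general A z hscale
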